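/- arXiv:2605.27026 — 3 statements merged into one kernel-verified Lean document; each statement's English description precedes it below -/
import Mathlib

section
/- Let $\alpha, r \in \mathbb{R}$ with $r > 0$, $x_0 \in \mathbb{R}$, $c < w < d$, and $\delta_+, \delta_- > 0$. Let $R = \{(x,y) : x \in [c,d],\ x_0 - \alpha x \le y \le x_0 - \alpha x + r\}$ be a parallelogram, and let $l_w = \{w\} \times [x_0 - \alpha w - \delta_-,\ x_0 - \alpha w + r + \delta_+]$ be a vertical segment splitting $R$ into $R^L = \{(x,y) \in R : x < w\}$ and $R^R = \{(x,y) \in R : x > w\}$. Then any continuous path in $\mathbb{R}^2 \setminus l_w$ joining a point of $R^L$ to a point of $R^R$ has length at least $\min(\delta_-, \delta_+)$. -/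
open Set

private lemma coord_le_dist (p q : EuclideanSpace ℝ (Fin 2)) (i : Fin 2) :
    |p i - q i| ≤ dist p q := by
  rw [EuclideanSpace.dist_eq]
  have h1 : |p i - q i| = Real.sqrt ((p i - q i) ^ 2) := (Real.sqrt_sq_eq_abs _).symm
  rw [h1]
  apply Real.sqrt_le_sqrt
  have := Finset.single_le_sum (f := fun j => dist (p j) (q j) ^ 2)
    (fun j _ => sq_nonneg _) (Finset.mem_univ i)
  simpa [Real.dist_eq, sq_abs] using this

/-- a vertical cut through a tilted strip forces paths from the
left part to the right part to have length at least `min δ₋ δ₊`. -/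
theorem stmt_1 (α r x0 c d w δp δm : ℝ) (hr : 0 < r) (hcw : c < w) (hwd : w < d)
    (hδp : 0 < δp) (hδm : 0 < δm)
    (lw R RL RR : Set (EuclideanSpace ℝ (Fin 2)))
    (hlw : lw = {p | p 0 = w ∧ p 1 ∈ Icc (x0 - α * w - δm) (x0 - α * w + r + δp)})
    (hR : R = {p | p 0 ∈ Icc c d ∧ x0 - α * p 0 ≤ p 1 ∧ p 1 ≤ x0 - α * p 0 + r})
    (hRL : RL = {p ∈ R | p 0 < w}) (hRR : RR = {p ∈ R | p 0 > w})
    (γ : ℝ → EuclideanSpace ℝ (Fin 2))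
    (hγcont : ContinuousOn γ (Icc 0 1))
    (hγavoid : ∀ t ∈ Icc (0:ℝ) 1, γ t ∉ lw)
    (hγ0 : γ 0 ∈ RL) (hγ1 : γ 1 ∈ RR) :
    ENNReal.ofReal (min δm δp) ≤ eVariationOn γ (Icc 0 1) := by
  subst hlw hR hRL hRR
  obtain ⟨⟨⟨hx0c, _⟩, hy00, hy01⟩, hx0w⟩ := hγ0
  obtain ⟨⟨⟨_, hx1d⟩, hy10, hy11⟩, hx1w⟩ := hγ1
  -- find a crossing time
  have hcont0 : ContinuousOn (fun t => γ t 0) (Icc 0 1) :=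
    (EuclideanSpace.proj (0 : Fin 2)).continuous.comp_continuousOn hγcont
  have hivt := intermediate_value_Icc (zero_le_one) hcont0
  have hwmem : w ∈ Icc (γ 0 0) (γ 1 0) := ⟨le_of_lt hx0w, le_of_lt hx1w⟩
  obtain ⟨t, ht, htw⟩ := hivt hwmem
  have havoid := hγavoid t ht
  simp only [mem_setOf_eq, mem_Icc, not_and, not_le] at havoid
  have hside : γ t 1 < x0 - α * w - δm ∨ x0 - α * w + r + δp < γ t 1 := by
    rcases lt_or_ge (γ t 1) (x0 - α * w - δm) with h | h
    · exact Or.inl h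
    · exact Or.inr (havoid htw h)
  -- reduce to a coordinate gap with one endpoint
  have key : ∀ u ∈ Icc (0:ℝ) 1, min δm δp ≤ |γ u 1 - γ t 1| →
      ENNReal.ofReal (min δm δp) ≤ eVariationOn γ (Icc 0 1) := by
    intro u hu h
    calc ENNReal.ofReal (min δm δp) ≤ ENNReal.ofReal (dist (γ u) (γ t)) :=
          ENNReal.ofReal_le_ofReal (h.trans (coord_le_dist _ _ _))
      _ = edist (γ u) (γ t) := (edist_dist _ _).symm
      _ ≤ eVariationOn γ (Icc 0 1) := eVariationOn.edist_le γ hu ht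
  have h01 : (1:ℝ) ∈ Icc (0:ℝ) 1 := ⟨zero_le_one, le_refl 1⟩
  have h00 : (0:ℝ) ∈ Icc (0:ℝ) 1 := ⟨le_refl 0, zero_le_one⟩
  rcases le_total 0 α with hα | hα
  · rcases hside with hlo | hhi
    · -- below: use γ 0 (left endpoint)
      refine key 0 h00 ?_
      have hprod : 0 ≤ α * (w - γ 0 0) := mul_nonneg hα (by linarith)
      calc min δm δp ≤ δm := min_le_left _ _
        _ ≤ γ 0 1 - γ t 1 := by nlinarith
        _ ≤ |γ 0 1 - γ t 1| := le_abs_self _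
    · -- above: use γ 1 (right endpoint)
      refine key 1 h01 ?_
      have hprod : 0 ≤ α * (γ 1 0 - w) := mul_nonneg hα (by linarith)
      calc min δm δp ≤ δp := min_le_right _ _
        _ ≤ γ t 1 - γ 1 1 := by nlinarith
        _ ≤ |γ 1 1 - γ t 1| := by rw [abs_sub_comm]; exact le_abs_self _
  · rcases hside with hlo | hhi
    · -- below: use γ 1
      refine key 1 h01 ?_
      have hprod : 0 ≤ (-α) * (γ 1 0 - w) := mul_nonneg (by linarith) (by linarith)
      calc min δm δp ≤ δm := min_le_left _ _
        _ ≤ γ 1 1 - γ t 1 := by nlinarith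
        _ ≤ |γ 1 1 - γ t 1| := le_abs_self _
    · -- above: use γ 0
      refine key 0 h00 ?_
      have hprod : 0 ≤ (-α) * (w - γ 0 0) := mul_nonneg (by linarith) (by linarith)
      calc min δm δp ≤ δp := min_le_right _ _
        _ ≤ γ t 1 - γ 0 1 := by nlinarith
        _ ≤ |γ 0 1 - γ t 1| := by rw [abs_sub_comm]; exact le_abs_self _
end

section
/- Let $H$ be a real inner product space, let $L \ge 0$, and let $y, y', m, m' \in H$ and $x, x', \mu, \mu'$ be points in a metric space $(X,d)$ with $f : \{x,x',\mu,\mu'\} \to H$ given by $f(x) = y$, $f(x') = y'$, $f(\mu) = m$, $f(\mu') = m'$. Suppose $d(x,\mu) = d(\mu,x') = d(x',\mu') = d(\mu',x) = \tfrac{1}{2} d(x,x')$ and $d(\mu,\mu') = \tfrac{1}{2} d(x,x')$, that $\|y - y'\| = L\, d(x,x')$, and that $\|m - m'\| \ge d(\mu,\mu')$. Then $\max\{\|y-m\|, \|m-y'\|, \|y'-m'\|, \|m'-y\|\}^2 \ge (L^2 + \tfrac14)\, d(x,\mu)^2$. -/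
open RealInnerProductSpace

/-- Parallelogram-type inequality: sum of squares of diagonals is at most
sum of squares of the four sides of a quadrilateral. -/
lemma diag_le_sides {H : Type*} [NormedAddCommGroup H] [InnerProductSpace ℝ H]
    (y y' m m' : H) :
    ‖y - y'‖ ^ 2 + ‖m - m'‖ ^ 2 ≤
      ‖y - m‖ ^ 2 + ‖m - y'‖ ^ 2 + ‖y' - m'‖ ^ 2 + ‖m' - y‖ ^ 2 := by
  have e1 : y - y' = (y - m) + (m - y') := by abel
  have e2 : m - m' = (m - y') + (y' - m') := by abel
  have e3 : ‖(m - y') + (m' - y)‖ ^ 2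
      = ‖m - y'‖ ^ 2 + 2 * ⟪m - y', m' - y⟫ + ‖m' - y‖ ^ 2 :=
    norm_add_sq_real _ _
  have e4 : (y - m) + (y' - m') = -((m - y') + (m' - y)) := by abel
  have e5 : ⟪m - y', (y - m) + (y' - m')⟫
      = -⟪m - y', m - y'⟫ - ⟪m - y', m' - y⟫ := by
    rw [e4, inner_neg_right, inner_add_right]; ring
  have e6 : ⟪m - y', (y - m) + (y' - m')⟫ = ⟪m - y', y - m⟫ + ⟪m - y', y' - m'⟫ :=
    inner_add_right _ _ _
  have e7 : ⟪m - y', m - y'⟫ = ‖m - y'‖ ^ 2 := real_inner_self_eq_norm_sq _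
  have hnn : (0:ℝ) ≤ ‖(m - y') + (m' - y)‖ ^ 2 := sq_nonneg _
  rw [e1, e2, norm_add_sq_real, norm_add_sq_real]
  have c1 : ⟪y - m, m - y'⟫ = ⟪m - y', y - m⟫ := real_inner_comm _ _
  nlinarith [hnn, e3, e5, e6, e7, c1]

/-- the diamond inequality used in the distortion lower bound. -/
theorem stmt_2 {H : Type*} [NormedAddCommGroup H] [InnerProductSpace ℝ H]
    {X : Type*} [MetricSpace X] (L : ℝ) (hL : 0 ≤ L)
    (y y' m m' : H) (x x' μ μ' : X)
    (f : X → H) (hfx : f x = y) (hfx' : f x' = y') (hfμ : f μ = m) (hfμ' : f μ' = m')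
    (h1 : dist x μ = dist x x' / 2) (h2 : dist μ x' = dist x x' / 2)
    (h3 : dist x' μ' = dist x x' / 2) (h4 : dist μ' x = dist x x' / 2)
    (h5 : dist μ μ' = dist x x' / 2)
    (hyy' : ‖y - y'‖ = L * dist x x') (hmm' : dist μ μ' ≤ ‖m - m'‖) :
    (L ^ 2 + 1 / 4) * dist x μ ^ 2 ≤
      (max (max ‖y - m‖ ‖m - y'‖) (max ‖y' - m'‖ ‖m' - y‖)) ^ 2 := by
  set M := max (max ‖y - m‖ ‖m - y'‖) (max ‖y' - m'‖ ‖m' - y‖) with hM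
  have hM0 : 0 ≤ M := le_trans (norm_nonneg _) (le_max_of_le_left (le_max_left _ _))
  have ha : ‖y - m‖ ≤ M := le_max_of_le_left (le_max_left _ _)
  have hb : ‖m - y'‖ ≤ M := le_max_of_le_left (le_max_right _ _)
  have hc : ‖y' - m'‖ ≤ M := le_max_of_le_right (le_max_left _ _)
  have hd : ‖m' - y‖ ≤ M := le_max_of_le_right (le_max_right _ _)
  have key := diag_le_sides y y' m m'
  have hmm'2 : dist μ μ' ^ 2 ≤ ‖m - m'‖ ^ 2 :=
    pow_le_pow_left₀ dist_nonneg hmm' 2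
  have hd0 : 0 ≤ dist x x' := dist_nonneg
  have hyy'2 : ‖y - y'‖ ^ 2 = (L * dist x x') ^ 2 := by rw [hyy']
  rw [h1]
  rw [h5] at hmm'2
  nlinarith [sq_nonneg (‖y - m‖ - M), sq_nonneg (‖m - y'‖ - M),
    sq_nonneg (‖y' - m'‖ - M), sq_nonneg (‖m' - y‖ - M),
    norm_nonneg (y - m), norm_nonneg (m - y'), norm_nonneg (y' - m'),
    norm_nonneg (m' - y), mul_le_mul ha ha (norm_nonneg _) hM0,
    mul_le_mul hb hb (norm_nonneg _) hM0, mul_le_mul hc hc (norm_nonneg _) hM0,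
    mul_le_mul hd hd (norm_nonneg _) hM0]
end

section
/- For every $\epsilon \in (0,1)$ there exist a Borel probability measure $\mu$ on $[0,1]$ and a constant $C > 0$ such that for every dyadic interval $I \subset [0,1]$ with midpoint $c$ and every $\delta \in (0,1)$ one has $\mu([c - \delta|I|, c + \delta|I|] \cap [0,1]) \ge C \delta^{\epsilon} \mu(I)$. -/
/-!
Take `b = 2 ^ m` with `1 / m ≤ ε` and let `μ` be the self-similar measure in base `b` giving
weight `1 / 2` to the last digit and `1 / (2 (b - 1))` to each other one; its distribution function
is the fixed point of a contraction on bounded continuous functions. As the last digit carries half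
the mass at every scale, `μ [1 - u, 1] ≥ u ^ (1 / m) / 2`. For a dyadic interval `I` of level `n < m`
the midpoint `c` is a `b`-adic point `(d + 1) / b`, so `[c - t |I| / 2, c]` contains the right end
`[c - t / b, c]` of the `d`-th digit interval and has mass `≳ t ^ (1 / m) ≥ t ^ (1 / m) μ I`.
The digit maps send dyadic intervals of level `n` to those of level `n + m` and scale both masses by
the same weight, so the bound passes to all levels.
-/

open MeasureTheory Set BoundedContinuousFunction

noncomputable section

namespace SelfSimilarCDF

def digitWeight (b d : ℕ) : ℝ := if d = b - 1 then 2⁻¹ else (2 * ((b : ℝ) - 1))⁻¹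

section digitWeight

variable {b : ℕ} (hb : 2 ≤ b) (d : ℕ)
include hb

lemma inv_two_mul_le_digitWeight : (2 * (b : ℝ))⁻¹ ≤ digitWeight b d := by
  have : (2 : ℝ) ≤ b := by exact_mod_cast hb
  unfold digitWeight
  split_ifs
  · rw [inv_le_inv₀ (by positivity) two_pos]; linarith
  · rw [inv_le_inv₀ (by positivity) (by linarith)]; linarith

lemma digitWeight_pos : 0 < digitWeight b d :=
  lt_of_lt_of_le (by positivity) (inv_two_mul_le_digitWeight hb d)

lemma digitWeight_le_half : digitWeight b d ≤ 2⁻¹ := by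
  have : (2 : ℝ) ≤ b := by exact_mod_cast hb
  unfold digitWeight
  split_ifs
  · rfl
  · rw [inv_le_inv₀ (by linarith) two_pos]; linarith

omit hb in
lemma digitWeight_last : digitWeight b (b - 1) = 2⁻¹ := if_pos rfl

lemma sum_digitWeight : ∑ d ∈ Finset.range b, digitWeight b d = 1 := by
  obtain ⟨c, rfl⟩ : ∃ c, b = c + 1 := ⟨b - 1, by omega⟩
  have hc : (c : ℝ) ≠ 0 := by norm_cast; omega
  have hlow : ∀ d ∈ Finset.range c, digitWeight (c + 1) d = (2 * (c : ℝ))⁻¹ := fun d hd => by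
    simp [digitWeight, (Finset.mem_range.mp hd).ne]
  rw [Finset.sum_range_succ, Finset.sum_congr rfl hlow, Finset.sum_const, Finset.card_range,
    nsmul_eq_mul, show digitWeight (c + 1) c = 2⁻¹ by simp [digitWeight]]
  field_simp
  ring

end digitWeight

structure IsUnitCDF (F : ℝ → ℝ) : Prop where
  mono : Monotone F
  eq_zero : ∀ x ≤ 0, F x = 0
  eq_one : ∀ x, 1 ≤ x → F x = 1

lemma isClosed_setOf_isUnitCDF : IsClosed {F : ℝ →ᵇ ℝ | IsUnitCDF F} := by
  have h : {F : ℝ → ℝ | IsUnitCDF F} = {F | Monotone F} ∩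
      ((⋂ x ∈ Iic (0 : ℝ), {F | F x = 0}) ∩ ⋂ x ∈ Ici (1 : ℝ), {F | F x = 1}) := by
    ext F
    simp only [mem_ofPred_eq, mem_inter_iff, mem_iInter, mem_Iic, mem_Ici]
    exact ⟨fun ⟨h₁, h₂, h₃⟩ => ⟨h₁, h₂, h₃⟩, fun ⟨h₁, h₂, h₃⟩ => ⟨h₁, h₂, h₃⟩⟩
  have hclosed : IsClosed {F : ℝ → ℝ | IsUnitCDF F} := by
    rw [h]
    exact isClosed_monotone.inter <|
      (isClosed_biInter fun x _ => isClosed_eq (continuous_apply x) continuous_const).inter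
      (isClosed_biInter fun x _ => isClosed_eq (continuous_apply x) continuous_const)
  exact hclosed.preimage continuous_coe

namespace IsUnitCDF

variable {F G : ℝ → ℝ}

lemma nonneg (hF : IsUnitCDF F) (x : ℝ) : 0 ≤ F x :=
  hF.eq_zero (min x 0) (min_le_right x 0) ▸ hF.mono (min_le_left x 0)

lemma le_one (hF : IsUnitCDF F) (x : ℝ) : F x ≤ 1 :=
  hF.eq_one (max x 1) (le_max_right x 1) ▸ hF.mono (le_max_left x 1)

lemma eq_of_notMem_Ioo (hF : IsUnitCDF F) (hG : IsUnitCDF G) {x : ℝ} (hx : x ∉ Ioo 0 1) :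
    F x = G x := by
  rcases le_or_gt x 0 with h | h
  · rw [hF.eq_zero x h, hG.eq_zero x h]
  · rw [hF.eq_one x (not_lt.mp fun h' => hx ⟨h, h'⟩), hG.eq_one x (not_lt.mp fun h' => hx ⟨h, h'⟩)]

end IsUnitCDF

lemma floor_eq_of_sub_mem_Ioo {x : ℝ} {d : ℕ} (h : x - d ∈ Ioo 0 1) : ⌊x⌋₊ = d := by
  rw [Nat.floor_eq_iff (by linarith [h.1, d.cast_nonneg (α := ℝ)])]
  constructor <;> linarith [h.1, h.2]

def cdfStep (b : ℕ) (F : ℝ →ᵇ ℝ) : ℝ →ᵇ ℝ :=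
  ∑ d ∈ Finset.range b, digitWeight b d • F.compContinuous ⟨fun x => b * x - d, by fun_prop⟩

lemma cdfStep_apply (b : ℕ) (F : ℝ →ᵇ ℝ) (x : ℝ) :
    cdfStep b F x = ∑ d ∈ Finset.range b, digitWeight b d * F (b * x - d) := by
  simp [cdfStep]

section cdfStep

variable {b : ℕ} (hb : 2 ≤ b)
include hb

lemma IsUnitCDF.cdfStep {F : ℝ →ᵇ ℝ} (hF : IsUnitCDF F) : IsUnitCDF (cdfStep b F) := by
  have hb0 : (0 : ℝ) ≤ b := b.cast_nonneg
  refine ⟨fun x y hxy => ?_, fun x hx => ?_, fun x hx => ?_⟩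
  · simp only [cdfStep_apply]
    gcongr with d
    · exact (digitWeight_pos hb d).le
    · exact hF.mono (by gcongr)
  · rw [cdfStep_apply]
    refine Finset.sum_eq_zero fun d _ => ?_
    rw [hF.eq_zero _ (by nlinarith [d.cast_nonneg (α := ℝ)]), mul_zero]
  · rw [cdfStep_apply, ← sum_digitWeight hb]
    refine Finset.sum_congr rfl fun d hd => ?_
    have : (d : ℝ) + 1 ≤ b := by exact_mod_cast Finset.mem_range.mp hd
    rw [hF.eq_one _ (by nlinarith), mul_one]

lemma dist_cdfStep_le {F G : ℝ →ᵇ ℝ} (hF : IsUnitCDF F) (hG : IsUnitCDF G) :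
    dist (cdfStep b F) (cdfStep b G) ≤ 2⁻¹ * dist F G := by
  refine (dist_le (by positivity)).2 fun x => ?_
  set D := ⌊b * x⌋₊
  have hterm : ∀ d, |digitWeight b d * F (b * x - d) - digitWeight b d * G (b * x - d)|
      ≤ 2⁻¹ * dist F G := fun d => by
    rw [← mul_sub, abs_mul, abs_of_pos (digitWeight_pos hb d), ← Real.dist_eq]
    exact mul_le_mul (digitWeight_le_half hb d) (dist_coe_le_dist _) dist_nonneg (by norm_num)
  -- only the digit `D = ⌊b x⌋` can see `F` and `G` inside `(0, 1)`, where they may differ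
  have hzero : ∀ d ∈ Finset.range b, d ≠ D →
      digitWeight b d * F (b * x - d) - digitWeight b d * G (b * x - d) = 0 := fun d _ hd => by
    rw [hF.eq_of_notMem_Ioo hG fun h => hd (floor_eq_of_sub_mem_Ioo h).symm, sub_self]
  rw [Real.dist_eq, cdfStep_apply, cdfStep_apply, ← Finset.sum_sub_distrib]
  by_cases hD : D ∈ Finset.range b
  · rw [Finset.sum_eq_single_of_mem D hD hzero]
    exact hterm D
  · rw [Finset.sum_eq_zero fun d hd => hzero d hd (ne_of_mem_of_not_mem hd hD), abs_zero]
    positivity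

lemma exists_isUnitCDF_cdfStep_eq :
    ∃ F : ℝ →ᵇ ℝ, IsUnitCDF F ∧ cdfStep b F = F := by
  set s := {F : ℝ →ᵇ ℝ | IsUnitCDF F}
  have hs : MapsTo (cdfStep b) s s := fun F hF => hF.cdfStep hb
  have hcontr : ContractingWith 2⁻¹ (hs.restrict (cdfStep b) s s) :=
    ⟨by norm_num, LipschitzWith.of_dist_le_mul fun F G => by
      simpa only [Subtype.dist_eq, MapsTo.val_restrict_apply, NNReal.coe_inv, NNReal.coe_ofNat]
        using dist_cdfStep_le hb F.2 G.2⟩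
  let F₀ : ℝ →ᵇ ℝ := mkOfBound ⟨fun x => projIcc 0 1 zero_le_one x, by fun_prop⟩ 1
    fun x y => Real.dist_le_of_mem_Icc_01 (projIcc 0 1 zero_le_one x).2 (projIcc 0 1 zero_le_one y).2
  have hF₀ : IsUnitCDF F₀ :=
    ⟨fun x y hxy => monotone_projIcc zero_le_one hxy,
      fun x hx => congrArg Subtype.val (projIcc_of_le_left zero_le_one hx),
      fun x hx => congrArg Subtype.val (projIcc_of_right_le zero_le_one hx)⟩
  obtain ⟨F, hF, hfix, -⟩ := hcontr.exists_fixedPoint' isClosed_setOf_isUnitCDF.isComplete hs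
    hF₀ (edist_ne_top _ _)
  exact ⟨F, hF, hfix⟩

end cdfStep

structure IsSelfSimilarCDF (b : ℕ) (F : ℝ → ℝ) : Prop extends IsUnitCDF F where
  eq_sum : ∀ x, F x = ∑ d ∈ Finset.range b, digitWeight b d * F (b * x - d)

lemma exists_continuous_isSelfSimilarCDF {b : ℕ} (hb : 2 ≤ b) :
    ∃ F : ℝ → ℝ, Continuous F ∧ IsSelfSimilarCDF b F := by
  obtain ⟨F, hF, hfix⟩ := exists_isUnitCDF_cdfStep_eq hb
  exact ⟨F, F.continuous, hF, fun x => by rw [← cdfStep_apply, hfix]⟩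

namespace IsSelfSimilarCDF

variable {b : ℕ} {F : ℝ → ℝ} (hF : IsSelfSimilarCDF b F)
include hF

lemma apply_add_div {d : ℕ} (hd : d < b) {y : ℝ} (hy : y ∈ Icc 0 1) :
    F ((d + y) / b) = ∑ e ∈ Finset.range d, digitWeight b e + digitWeight b d * F y := by
  have hb : (b : ℝ) ≠ 0 := by norm_cast; omega
  have hlow : ∀ e ∈ Finset.range d, digitWeight b e * F (d + y - e) = digitWeight b e := by
    intro e he
    have : (e : ℝ) + 1 ≤ d := by exact_mod_cast Finset.mem_range.mp he
    rw [hF.eq_one _ (by linarith [hy.1]), mul_one]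
  have hhigh : ∀ e ∈ Finset.Ico (d + 1) b, digitWeight b e * F (d + y - e) = 0 := by
    intro e he
    have : (d : ℝ) + 1 ≤ e := by exact_mod_cast (Finset.mem_Ico.mp he).1
    rw [hF.eq_zero _ (by linarith [hy.2]), mul_zero]
  have harg : ∀ e : ℕ, (b : ℝ) * ((d + y) / b) - e = d + y - e := fun e => by
    rw [mul_div_cancel₀ _ hb]
  rw [hF.eq_sum]
  simp only [harg]
  rw [← Finset.sum_range_add_sum_Ico _ hd, Finset.sum_range_succ, Finset.sum_congr rfl hlow,
    Finset.sum_eq_zero hhigh, add_sub_cancel_left, add_zero]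

lemma apply_add_div_sub_apply_add_div {d : ℕ} (hd : d < b) {y y' : ℝ} (hy : y ∈ Icc 0 1)
    (hy' : y' ∈ Icc 0 1) :
    F ((d + y') / b) - F ((d + y) / b) = digitWeight b d * (F y' - F y) := by
  rw [hF.apply_add_div hd hy, hF.apply_add_div hd hy']
  ring

lemma one_sub_apply_one_sub_inv_pow (hb : 1 ≤ b) (i : ℕ) :
    1 - F (1 - ((b : ℝ)⁻¹) ^ i) = 2⁻¹ ^ i := by
  induction i with
  | zero => simp [hF.eq_zero 0 le_rfl]
  | succ i ih =>
    have hb0 : (b : ℝ) ≠ 0 := by norm_cast; omega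
    have hlast : ((b - 1 : ℕ) : ℝ) = b - 1 := by rw [Nat.cast_sub hb, Nat.cast_one]
    have hpow : ((b : ℝ)⁻¹) ^ i ∈ Icc 0 1 :=
      ⟨by positivity, pow_le_one₀ (by positivity) (inv_le_one_of_one_le₀ (by exact_mod_cast hb))⟩
    have hy : 1 - ((b : ℝ)⁻¹) ^ i ∈ Icc 0 1 := ⟨by linarith [hpow.2], by linarith [hpow.1]⟩
    have h := hF.apply_add_div_sub_apply_add_div (Nat.sub_lt hb one_pos) hy ⟨zero_le_one, le_rfl⟩
    have hone : ((b : ℝ) - 1 + 1) / b = 1 := by rw [sub_add_cancel, div_self hb0]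
    have harg : ((b : ℝ) - 1 + (1 - ((b : ℝ)⁻¹) ^ i)) / b = 1 - ((b : ℝ)⁻¹) ^ (i + 1) := by
      rw [pow_succ, sub_add_sub_cancel, sub_div, div_self hb0, div_eq_mul_inv]
    rw [digitWeight_last, hF.eq_one 1 le_rfl, ih, hlast, hone, harg, hF.eq_one 1 le_rfl] at h
    rw [h, pow_succ, mul_comm]

end IsSelfSimilarCDF

def dyadicMass (F : ℝ → ℝ) (n k : ℕ) : ℝ := F ((k + 1) / 2 ^ n) - F (k / 2 ^ n)

def midpointMass (F : ℝ → ℝ) (t : ℝ) (n k : ℕ) : ℝ :=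
  F ((2 * k + 1) / 2 ^ (n + 1)) - F ((2 * k + 1 - t) / 2 ^ (n + 1))

lemma _root_.Monotone.dyadicMass_nonneg {F : ℝ → ℝ} (hF : Monotone F) (n k : ℕ) :
    0 ≤ dyadicMass F n k :=
  sub_nonneg.2 (hF (by gcongr; linarith))

lemma IsUnitCDF.dyadicMass_le_one {F : ℝ → ℝ} (hF : IsUnitCDF F) (n k : ℕ) :
    dyadicMass F n k ≤ 1 := by
  rw [dyadicMass]
  linarith [hF.le_one ((k + 1) / 2 ^ n), hF.nonneg (k / 2 ^ n)]

lemma _root_.Monotone.midpointMass_nonneg {F : ℝ → ℝ} (hF : Monotone F) {t : ℝ} (ht : 0 ≤ t)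
    (n k : ℕ) : 0 ≤ midpointMass F t n k :=
  sub_nonneg.2 (hF (by gcongr; linarith))

namespace IsSelfSimilarCDF

variable {m : ℕ} {F : ℝ → ℝ} (hF : IsSelfSimilarCDF (2 ^ m) F)
include hF

lemma rpow_inv_div_two_le_one_sub_apply_one_sub (hm : m ≠ 0) {u : ℝ} (hu0 : 0 < u) (hu1 : u ≤ 1) :
    u ^ (m⁻¹ : ℝ) / 2 ≤ 1 - F (1 - u) := by
  set q : ℝ := ((2 ^ m : ℕ) : ℝ)⁻¹
  have hq : q = 2⁻¹ ^ m := by simp [q, inv_pow]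
  have hq1 : q < 1 := hq ▸ pow_lt_one₀ (by norm_num) (by norm_num) hm
  obtain ⟨i, hlt, hle⟩ := exists_nat_pow_near_of_lt_one hu0 hu1 (by positivity) hq1
  have hroot : (q ^ i) ^ (m⁻¹ : ℝ) = 2⁻¹ ^ i := by
    rw [hq, ← pow_mul, mul_comm, pow_mul, Real.pow_rpow_inv_natCast (by positivity) hm]
  calc u ^ (m⁻¹ : ℝ) / 2 ≤ (q ^ i) ^ (m⁻¹ : ℝ) / 2 := by gcongr
    _ = 1 - F (1 - q ^ (i + 1)) := by
      rw [hroot, hF.one_sub_apply_one_sub_inv_pow Nat.one_le_two_pow, pow_succ, div_eq_mul_inv]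
    _ ≤ 1 - F (1 - u) := by linarith [hF.mono (by linarith : 1 - u ≤ 1 - q ^ (i + 1))]

lemma apply_div_two_pow_add {d : ℕ} (hd : d < 2 ^ m) (j : ℕ) {x : ℝ} (hx : x ∈ Icc 0 (2 ^ j)) :
    F ((2 ^ j * d + x) / 2 ^ (j + m)) =
      ∑ e ∈ Finset.range d, digitWeight (2 ^ m) e + digitWeight (2 ^ m) d * F (x / 2 ^ j) := by
  have hy : x / 2 ^ j ∈ Icc (0 : ℝ) 1 :=
    ⟨div_nonneg hx.1 (by positivity), (div_le_one (by positivity)).2 hx.2⟩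
  rw [← hF.apply_add_div hd hy, Nat.cast_pow, Nat.cast_ofNat, pow_add]
  field_simp

lemma dyadicMass_add {d : ℕ} (hd : d < 2 ^ m) {n k : ℕ} (hk : k < 2 ^ n) :
    dyadicMass F (n + m) (2 ^ n * d + k) = digitWeight (2 ^ m) d * dyadicMass F n k := by
  have hk' : (k : ℝ) + 1 ≤ 2 ^ n := by exact_mod_cast hk
  have h₁ := hF.apply_div_two_pow_add hd n (x := k + 1) ⟨by positivity, hk'⟩
  have h₂ := hF.apply_div_two_pow_add hd n (x := k) ⟨by positivity, by linarith⟩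
  simp only [dyadicMass]
  push_cast
  rw [add_assoc, h₁, h₂]
  ring

lemma midpointMass_add {d : ℕ} (hd : d < 2 ^ m) {n k : ℕ} (hk : k < 2 ^ n) {t : ℝ}
    (ht0 : 0 ≤ t) (ht1 : t ≤ 1) :
    midpointMass F t (n + m) (2 ^ n * d + k) = digitWeight (2 ^ m) d * midpointMass F t n k := by
  have hk' : (k : ℝ) + 1 ≤ 2 ^ n := by exact_mod_cast hk
  have hpow : (2 : ℝ) ^ (n + 1) = 2 * 2 ^ n := pow_succ' 2 n
  have h₁ := hF.apply_div_two_pow_add hd (n + 1) (x := 2 * k + 1) ⟨by positivity, by linarith⟩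
  have h₂ := hF.apply_div_two_pow_add hd (n + 1) (x := 2 * k + 1 - t)
    ⟨by linarith [(k.cast_nonneg : (0 : ℝ) ≤ k)], by linarith⟩
  have e₁ : (2 * ((2 ^ n * d + k : ℕ) : ℝ) + 1) / 2 ^ (n + m + 1) =
      (2 ^ (n + 1) * d + (2 * k + 1)) / 2 ^ (n + 1 + m) := by
    rw [Nat.add_right_comm]; push_cast; ring
  have e₂ : (2 * ((2 ^ n * d + k : ℕ) : ℝ) + 1 - t) / 2 ^ (n + m + 1) =
      (2 ^ (n + 1) * d + (2 * k + 1 - t)) / 2 ^ (n + 1 + m) := by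
    rw [Nat.add_right_comm]; push_cast; ring
  rw [midpointMass, midpointMass, e₁, e₂, h₁, h₂]
  ring

lemma mul_dyadicMass_le_midpointMass_of_lt (hm : m ≠ 0) {n k : ℕ} (hnm : n < m)
    (hk : k < 2 ^ n) {t : ℝ} (ht0 : 0 < t) (ht1 : t ≤ 1) :
    (4 * 2 ^ m : ℝ)⁻¹ * t ^ (m⁻¹ : ℝ) * dyadicMass F n k ≤ midpointMass F t n k := by
  obtain ⟨j, hj⟩ : ∃ j, m = n + 1 + j := ⟨m - (n + 1), by omega⟩
  set d := (2 * k + 1) * 2 ^ j - 1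
  have hd : d < 2 ^ m := by
    have : (2 * k + 1) * 2 ^ j < 2 ^ (n + 1) * 2 ^ j :=
      Nat.mul_lt_mul_of_pos_right (by rw [pow_succ]; omega) (by positivity)
    rw [hj, pow_add]; omega
  have hdR : (d : ℝ) + 1 = (2 * k + 1) * 2 ^ j := by
    rw [Nat.cast_sub (Nat.one_le_iff_ne_zero.2 (by positivity))]
    push_cast; ring
  have hmid : ((2 * k + 1) / 2 ^ (n + 1) : ℝ) = (d + 1) / 2 ^ m := by
    rw [hdR, hj, pow_add (2 : ℝ) (n + 1) j]; field_simp
  have hleft : ((2 * k + 1 - t) / 2 ^ (n + 1) : ℝ) ≤ (d + (1 - t)) / 2 ^ m := by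
    have h2j : t ≤ t * 2 ^ j := le_mul_of_one_le_right ht0.le (one_le_pow₀ one_le_two)
    rw [← add_sub_assoc, hdR, hj, pow_add (2 : ℝ) (n + 1) j,
      div_le_div_iff₀ (by positivity) (by positivity)]
    nlinarith [mul_le_mul_of_nonneg_right h2j (pow_pos two_pos (n + 1)).le]
  have hcentral := hF.apply_add_div_sub_apply_add_div hd ⟨sub_nonneg.2 ht1, by linarith⟩
    ⟨zero_le_one, le_rfl⟩
  rw [hF.eq_one 1 le_rfl, Nat.cast_pow, Nat.cast_ofNat] at hcentral
  have hw : (2 * 2 ^ m : ℝ)⁻¹ ≤ digitWeight (2 ^ m) d := by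
    exact_mod_cast inv_two_mul_le_digitWeight (Nat.le_self_pow hm 2) d
  calc (4 * 2 ^ m : ℝ)⁻¹ * t ^ (m⁻¹ : ℝ) * dyadicMass F n k
      ≤ (4 * 2 ^ m : ℝ)⁻¹ * t ^ (m⁻¹ : ℝ) * 1 := by gcongr; exact hF.dyadicMass_le_one n k
    _ = (2 * 2 ^ m : ℝ)⁻¹ * (t ^ (m⁻¹ : ℝ) / 2) := by ring
    _ ≤ digitWeight (2 ^ m) d * (1 - F (1 - t)) :=
        mul_le_mul hw (hF.rpow_inv_div_two_le_one_sub_apply_one_sub hm ht0 ht1) (by positivity)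
          (digitWeight_pos (Nat.le_self_pow hm 2) d).le
    _ = F ((d + 1) / 2 ^ m) - F ((d + (1 - t)) / 2 ^ m) := hcentral.symm
    _ ≤ midpointMass F t n k := by
        rw [midpointMass, hmid]
        linarith [hF.mono hleft]

theorem mul_dyadicMass_le_midpointMass (hm : m ≠ 0) {n k : ℕ} (hk : k < 2 ^ n) {t : ℝ}
    (ht0 : 0 < t) (ht1 : t ≤ 1) :
    (4 * 2 ^ m : ℝ)⁻¹ * t ^ (m⁻¹ : ℝ) * dyadicMass F n k ≤ midpointMass F t n k := by
  induction n using Nat.strong_induction_on generalizing k with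
  | _ n ih =>
  rcases lt_or_ge n m with hnm | hnm
  · exact hF.mul_dyadicMass_le_midpointMass_of_lt hm hnm hk ht0 ht1
  obtain ⟨n, rfl⟩ : ∃ n', n = n' + m := ⟨n - m, by omega⟩
  have hd : k / 2 ^ n < 2 ^ m := Nat.div_lt_of_lt_mul (by rwa [← pow_add])
  have hk₀ : k % 2 ^ n < 2 ^ n := Nat.mod_lt _ (by positivity)
  rw [← Nat.div_add_mod k (2 ^ n), hF.dyadicMass_add hd hk₀, hF.midpointMass_add hd hk₀ ht0.le ht1,
    mul_left_comm]
  exact mul_le_mul_of_nonneg_left (ih n (by omega) hk₀)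
    (digitWeight_pos (Nat.le_self_pow hm 2) _).le

end IsSelfSimilarCDF

lemma IsUnitCDF.exists_measure_Icc {F : ℝ → ℝ} (hF : IsUnitCDF F) (hc : Continuous F) :
    ∃ μ : Measure ℝ, IsProbabilityMeasure μ ∧ ∀ a c, μ (Icc a c) = ENNReal.ofReal (F c - F a) := by
  let S : StieltjesFunction ℝ := ⟨F, hF.mono, fun x => hc.continuousWithinAt⟩
  have hbot : Filter.Tendsto F Filter.atBot (nhds 0) := tendsto_const_nhds.congr' <|
    (Filter.eventually_le_atBot 0).mono fun x hx => (hF.eq_zero x hx).symm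
  have htop : Filter.Tendsto F Filter.atTop (nhds 1) := tendsto_const_nhds.congr' <|
    (Filter.eventually_ge_atTop 1).mono fun x hx => (hF.eq_one x hx).symm
  refine ⟨S.measure, S.isProbabilityMeasure hbot htop, fun a c => ?_⟩
  rw [S.measure_Icc, hc.continuousWithinAt.leftLim_eq]

lemma Icc_sub_div_two_pow_subset {n k : ℕ} (hk : k < 2 ^ n) {δ : ℝ} (hδ0 : 0 < δ) (hδ1 : δ < 1) :
    Icc ((2 * k + 1 - δ) / 2 ^ (n + 1)) ((2 * k + 1) / 2 ^ (n + 1)) ⊆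
      Icc ((k + 1 / 2) / 2 ^ n - δ / 2 ^ n) ((k + 1 / 2) / 2 ^ n + δ / 2 ^ n) ∩ Icc 0 1 := by
  have hk' : (k : ℝ) + 1 ≤ 2 ^ n := by exact_mod_cast hk
  have hmid : (k + 1 / 2 : ℝ) / 2 ^ n = (2 * k + 1) / 2 ^ (n + 1) := by
    rw [pow_succ]; field_simp
  have hrad : δ / 2 ^ n = 2 * δ / 2 ^ (n + 1) := by
    rw [pow_succ]; field_simp
  rintro x ⟨hx₁, hx₂⟩
  rw [hmid, hrad, ← sub_div, ← add_div]
  refine ⟨⟨le_trans (by gcongr; linarith) hx₁,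
      hx₂.trans (div_le_div_of_nonneg_right (by linarith) (by positivity))⟩,
    (div_nonneg (by linarith [k.cast_nonneg (α := ℝ)]) (by positivity)).trans hx₁,
    hx₂.trans ((div_le_one (by positivity)).2 (by rw [pow_succ]; linarith))⟩

end SelfSimilarCDF

open SelfSimilarCDF in
/-- existence of a measure giving mass `≳ δ^ε` to central
sub-intervals of dyadic intervals. -/
theorem stmt_8 :
    ∀ ε ∈ Set.Ioo (0 : ℝ) 1,
      ∃ (μ : Measure ℝ) (C : ℝ), IsProbabilityMeasure μ ∧ μ (Icc (0 : ℝ) 1) = 1 ∧ 0 < C ∧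
        ∀ (n k : ℕ), k < 2 ^ n → ∀ δ ∈ Set.Ioo (0 : ℝ) 1,
          C * δ ^ ε * (μ (Icc ((k : ℝ) * 2 ^ (-(n : ℤ))) ((k + 1 : ℝ) * 2 ^ (-(n : ℤ))))).toReal ≤
            (μ (Icc ((k + 1 / 2 : ℝ) * 2 ^ (-(n : ℤ)) - δ * 2 ^ (-(n : ℤ)))
                ((k + 1 / 2 : ℝ) * 2 ^ (-(n : ℤ)) + δ * 2 ^ (-(n : ℤ))) ∩ Icc 0 1)).toReal := by
  rintro ε ⟨hε0, -⟩
  obtain ⟨m, hm, hmε⟩ : ∃ m : ℕ, m ≠ 0 ∧ (m : ℝ)⁻¹ ≤ ε := by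
    obtain ⟨m, hm⟩ := exists_nat_one_div_lt hε0
    exact ⟨m + 1, m.succ_ne_zero, by simpa using hm.le⟩
  obtain ⟨F, hFc, hF⟩ := exists_continuous_isSelfSimilarCDF (Nat.le_self_pow hm 2)
  obtain ⟨μ, hμ, hμF⟩ := hF.exists_measure_Icc hFc
  refine ⟨μ, (4 * 2 ^ m)⁻¹, hμ, ?_, by positivity, ?_⟩
  · rw [hμF, hF.eq_one 1 le_rfl, hF.eq_zero 0 le_rfl, sub_zero, ENNReal.ofReal_one]
  rintro n k hk δ ⟨hδ0, hδ1⟩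
  simp only [zpow_neg, zpow_natCast, ← div_eq_mul_inv]
  calc (4 * 2 ^ m : ℝ)⁻¹ * δ ^ ε * (μ (Icc (k / 2 ^ n) ((k + 1) / 2 ^ n))).toReal
      ≤ (4 * 2 ^ m : ℝ)⁻¹ * δ ^ (m⁻¹ : ℝ) * dyadicMass F n k := by
        rw [hμF, ← dyadicMass, ENNReal.toReal_ofReal (hF.mono.dyadicMass_nonneg n k)]
        gcongr _ * ?_ * _
        · exact hF.mono.dyadicMass_nonneg n k
        · exact Real.rpow_le_rpow_of_exponent_ge hδ0 hδ1.le hmε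
    _ ≤ midpointMass F δ n k := hF.mul_dyadicMass_le_midpointMass hm hk hδ0 hδ1.le
    _ = (μ (Icc ((2 * k + 1 - δ) / 2 ^ (n + 1)) ((2 * k + 1) / 2 ^ (n + 1)))).toReal := by
        rw [hμF, ← midpointMass, ENNReal.toReal_ofReal (hF.mono.midpointMass_nonneg hδ0.le n k)]
    _ ≤ _ := ENNReal.toReal_mono (measure_ne_top _ _)
        (measure_mono (Icc_sub_div_two_pow_subset hk hδ0 hδ1))
end
end
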